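/- Let H be a real inner product space, I a finite index set, N a natural number, x ∈ H, and families (r_i)_{i∈I}, (w_i)_{i∈I} in H and nonnegative reals (ε_i)_{i∈I} with x = ∑_{i∈I} r_i and ‖r_i − w_i‖ ≤ ε_i for every i. Suppose R is a symmetric relation on I such that ⟨r_i − w_i, r_j − w_j⟩ = 0 whenever ¬R(i,j), and for every i ∈ I the set {j ∈ I : R(i,j)} has cardinality at most N. Then ‖x − ∑_{i∈I} w_i‖² ≤ N · ∑_{i∈I} ε_i². -/
import Mathlib


open Finset RealInnerProductSpace

/-- Abstract edge-coupling estimate of ExpMsFEM: if `x = ∑ i, r i`, each local term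
`r i` is approximated by `w i` with error `ε i`, and the error terms `r i - w i` are
pairwise orthogonal except along a symmetric adjacency relation `R` of degree at
most `N`, then `‖x - ∑ i, w i‖² ≤ N · ∑ i, (ε i)²`. -/
theorem edge_coupling_estimate
    {H : Type*} [NormedAddCommGroup H] [InnerProductSpace ℝ H]
    {ι : Type*} [Fintype ι] [DecidableEq ι]
    (N : ℕ) (x : H) (r w : ι → H) (ε : ι → ℝ)
    (hε : ∀ i, 0 ≤ ε i)
    (hx : x = ∑ i, r i)
    (happrox : ∀ i, ‖r i - w i‖ ≤ ε i)
    (R : ι → ι → Prop) [DecidableRel R]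
    (hsymm : ∀ i j, R i j → R j i)
    (horth : ∀ i j, ¬ R i j → ⟪r i - w i, r j - w j⟫ = (0 : ℝ))
    (hdeg : ∀ i, (Finset.univ.filter fun j => R i j).card ≤ N) :
    ‖x - ∑ i, w i‖ ^ 2 ≤ (N : ℝ) * ∑ i, (ε i) ^ 2 := by
  set e := fun i => r i - w i with he
  have hxe : x - ∑ i, w i = ∑ i, e i := by
    rw [hx, ← Finset.sum_sub_distrib]
  have hRiff : ∀ i j, R i j ↔ R j i := fun i j => ⟨hsymm i j, hsymm j i⟩
  calc ‖x - ∑ i, w i‖ ^ 2 = ∑ i, ∑ j, ⟪e i, e j⟫ := by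
        rw [hxe, ← real_inner_self_eq_norm_sq, sum_inner]
        exact Finset.sum_congr rfl fun i _ => inner_sum _ _ _
    _ = ∑ i, ∑ j ∈ univ.filter (fun j => R i j), ⟪e i, e j⟫ := by
        refine Finset.sum_congr rfl fun i _ => ?_
        exact (Finset.sum_filter_of_ne fun j _ h => by
          by_contra hR; exact h (horth i j hR)).symm
    _ ≤ ∑ i, ∑ j ∈ univ.filter (fun j => R i j), (ε i ^ 2 + ε j ^ 2) / 2 := by
        refine Finset.sum_le_sum fun i _ => Finset.sum_le_sum fun j _ => ?_
        have h1 : ⟪e i, e j⟫ ≤ ‖e i‖ * ‖e j‖ := real_inner_le_norm _ _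
        have h2 : ‖e i‖ * ‖e j‖ ≤ ε i * ε j :=
          mul_le_mul (happrox i) (happrox j) (norm_nonneg _) (hε i)
        nlinarith [sq_nonneg (ε i - ε j)]
    _ = ((∑ i, ∑ j ∈ univ.filter (fun j => R i j), ε i ^ 2)
        + (∑ i, ∑ j ∈ univ.filter (fun j => R i j), ε j ^ 2)) / 2 := by
        rw [← Finset.sum_add_distrib, Finset.sum_div]
        refine Finset.sum_congr rfl fun i _ => ?_
        rw [← Finset.sum_add_distrib, Finset.sum_div]
    _ ≤ (((N : ℝ) * ∑ i, ε i ^ 2) + ((N : ℝ) * ∑ i, ε i ^ 2)) / 2 := by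
        have key : ∀ f : ι → ℝ, (∀ i, 0 ≤ f i) →
            ∑ i, ∑ _j ∈ univ.filter (fun j => R i j), f i ≤ (N : ℝ) * ∑ i, f i := by
          intro f hf
          rw [Finset.mul_sum]
          refine Finset.sum_le_sum fun i _ => ?_
          rw [Finset.sum_const, nsmul_eq_mul]
          exact mul_le_mul_of_nonneg_right (by exact_mod_cast hdeg i) (hf i)
        have hswap : ∑ i, ∑ j ∈ univ.filter (fun j => R i j), ε j ^ 2
            = ∑ j, ∑ _i ∈ univ.filter (fun i => R j i), ε j ^ 2 := by
          simp only [Finset.sum_filter]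
          rw [Finset.sum_comm]
          refine Finset.sum_congr rfl fun j _ => Finset.sum_congr rfl fun i _ => ?_
          simp [hRiff i j]
        have hA := key (fun i => ε i ^ 2) fun i => sq_nonneg _
        have hB : ∑ i, ∑ j ∈ univ.filter (fun j => R i j), ε j ^ 2
            ≤ (N : ℝ) * ∑ i, ε i ^ 2 := by
          rw [hswap]; exact key _ fun i => sq_nonneg _
        linarith
    _ = (N : ℝ) * ∑ i, ε i ^ 2 := by ring
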